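/- There is a monoid isomorphism \hat B_n ≅ Q_n ⋊ B_n, where Q_n is the free commutative monoid on q_1,…,q_n and B_n acts on Q_n via the permutation action of the canonical projection B_n → S_n on the generators q_1,…,q_n. Consequently, every element of \hat B_n can be written uniquely in the form q_1^{a_1} ⋯ q_n^{a_n} X with X ∈ B_n and a_i ≥ 0. -/

import Mathlib

/-- Generators of the monoid `B̂_n` of braids with marked points: `s i` is `σ_{i+1}`,
`sInv i` is `σ_{i+1}⁻¹` (for `i : Fin (n-1)`, so these are `σ_1,…,σ_{n-1}` and their
inverses), and `q i` is the marked-point generator `q_{i+1}` (for `i : Fin n`). -/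
inductive MarkedBraidGen (n : ℕ) : Type
  | s : Fin (n - 1) → MarkedBraidGen n
  | sInv : Fin (n - 1) → MarkedBraidGen n
  | q : Fin n → MarkedBraidGen n

/-- The lower strand index `j` (as an element of `Fin n`) of the generator `σ` indexed by
`j : Fin (n-1)`. -/
def sLo {n : ℕ} (j : Fin (n - 1)) : Fin n := ⟨j.1, by have := j.2; omega⟩

/-- The upper strand index `j+1` of the generator `σ` indexed by `j : Fin (n-1)`. -/
def sHi {n : ℕ} (j : Fin (n - 1)) : Fin n := ⟨j.1 + 1, by have := j.2; omega⟩

/-- The transposition `T_j = (j, j+1)` on the `n` strands. -/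
def braidT {n : ℕ} (j : Fin (n - 1)) : Equiv.Perm (Fin n) := Equiv.swap (sLo j) (sHi j)

open MarkedBraidGen in
/-- The defining relations of `B̂_n`: `σ_j σ_j⁻¹ = σ_j⁻¹ σ_j = 1`, the braid relations
(adjacent and distant), `q_i q_j = q_j q_i`, and `q_i σ_j = σ_j q_{T_j(i)}`. -/
inductive MarkedBraidRel (n : ℕ) :
    FreeMonoid (MarkedBraidGen n) → FreeMonoid (MarkedBraidGen n) → Prop
  | mul_inv (i : Fin (n - 1)) :
      MarkedBraidRel n (FreeMonoid.of (s i) * FreeMonoid.of (sInv i)) 1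
  | inv_mul (i : Fin (n - 1)) :
      MarkedBraidRel n (FreeMonoid.of (sInv i) * FreeMonoid.of (s i)) 1
  | braid (i j : Fin (n - 1)) (h : (i : ℕ) + 1 = j) :
      MarkedBraidRel n
        (FreeMonoid.of (s i) * FreeMonoid.of (s j) * FreeMonoid.of (s i))
        (FreeMonoid.of (s j) * FreeMonoid.of (s i) * FreeMonoid.of (s j))
  | comm (i j : Fin (n - 1)) (h : (i : ℕ) + 2 ≤ j) :
      MarkedBraidRel n
        (FreeMonoid.of (s i) * FreeMonoid.of (s j))
        (FreeMonoid.of (s j) * FreeMonoid.of (s i))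
  | qq (i j : Fin n) :
      MarkedBraidRel n
        (FreeMonoid.of (q i) * FreeMonoid.of (q j))
        (FreeMonoid.of (q j) * FreeMonoid.of (q i))
  | qs (i : Fin n) (j : Fin (n - 1)) :
      MarkedBraidRel n
        (FreeMonoid.of (q i) * FreeMonoid.of (s j))
        (FreeMonoid.of (s j) * FreeMonoid.of (q (braidT j i)))

/-- The congruence generated by the defining relations of `B̂_n`. -/
def markedBraidCon (n : ℕ) : Con (FreeMonoid (MarkedBraidGen n)) :=
  conGen (MarkedBraidRel n)

/-- The monoid `B̂_n` of braids with marked points, given by the stated presentation. -/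
abbrev MarkedBraid (n : ℕ) := (markedBraidCon n).Quotient

/-- The Artin braid relations on `m` generators `σ_1,…,σ_m` (indexed by `Fin m`):
`σ_iσ_jσ_i(σ_jσ_iσ_j)⁻¹` for adjacent `i, j` and `σ_iσ_j(σ_jσ_i)⁻¹` for distant `i, j`. -/
def braidRels (m : ℕ) : Set (FreeGroup (Fin m)) :=
  {r | (∃ i j : Fin m, (i : ℕ) + 1 = j ∧
          r = FreeGroup.of i * FreeGroup.of j * FreeGroup.of i
                * (FreeGroup.of j * FreeGroup.of i * FreeGroup.of j)⁻¹)
     ∨ (∃ i j : Fin m, (i : ℕ) + 2 ≤ j ∧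
          r = FreeGroup.of i * FreeGroup.of j * (FreeGroup.of j * FreeGroup.of i)⁻¹)}

/-- The braid group `B_n` on `n` strands, presented with the `n-1` Artin generators. -/
abbrev BraidGroup (n : ℕ) := PresentedGroup (braidRels (n - 1))

/-- The element `q_1^{a_1} ⋯ q_n^{a_n}` of `B̂_n` attached to an exponent vector
`a : Fin n → ℕ` (an element of the free commutative monoid `Q_n`). -/
def qPow (n : ℕ) (a : Fin n → ℕ) : MarkedBraid n :=
  (List.ofFn fun i : Fin n =>
    ((markedBraidCon n).mk' (FreeMonoid.of (MarkedBraidGen.q i))) ^ (a i)).prod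

/-! The assignment `q_i ↦ (e_i, 1)`, `σ_j^{±1} ↦ (0, σ_j^{±1})` respects the defining relations
of `B̂_n`, so it defines a homomorphism `B̂_n → Q_n ⋊ B_n`. Conversely `(a, X) ↦ q^a X` is
multiplicative because `X q_i X⁻¹ = q_{φ(X) i}` for every braid `X`: this holds for the
generators `σ_j` by the relation `q_i σ_j = σ_j q_{T_j(i)}`, hence on the subgroup they generate,
which is all of `B_n`. Both composites are the identity on generators. -/

section ListProd

variable {M : Type*} [Monoid M] {m : ℕ}

theorem SemiconjBy.list_prod_ofFn {u : M} {x y : Fin m → M}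
    (h : ∀ i, SemiconjBy u (x i) (y i)) : SemiconjBy u (List.ofFn x).prod (List.ofFn y).prod := by
  induction m with
  | zero => exact SemiconjBy.one_right u
  | succ m ih =>
    simpa only [List.ofFn_succ, List.prod_cons] using (h 0).mul_right (ih fun i => h i.succ)

theorem List.prod_ofFn_mul_of_commute {f g : Fin m → M} (h : ∀ i j, Commute (g i) (f j)) :
    (List.ofFn fun i => f i * g i).prod = (List.ofFn f).prod * (List.ofFn g).prod := by
  induction m with
  | zero => simp
  | succ m ih =>
    have hg : Commute (g 0) (List.ofFn fun i => f i.succ).prod :=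
      Commute.list_prod_right _ _ (by simp [List.mem_ofFn, h])
    simp only [List.ofFn_succ, List.prod_cons]
    rw [ih (fun i j => h i.succ j.succ), mul_assoc, ← mul_assoc (g 0), hg.eq]
    simp only [mul_assoc]

theorem List.prod_ofFn_comp_perm {f : Fin m → M} (h : ∀ i j, Commute (f i) (f j))
    (σ : Equiv.Perm (Fin m)) : (List.ofFn (f ∘ σ)).prod = (List.ofFn f).prod :=
  (Equiv.Perm.ofFn_comp_perm σ f).prod_eq' (List.pairwise_ofFn.2 fun _ _ _ => h _ _)

end ListProd

theorem MonoidHom.semiconjBy_of_closure_eq_top {G M α : Type*} [Group G] [Monoid M] (ι : G →* M)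
    (φ : G →* Equiv.Perm α) (q : α → M) {S : Set G} (hS : Subgroup.closure S = ⊤)
    (h : ∀ x ∈ S, ∀ i, SemiconjBy (ι x) (q i) (q (φ x i))) (X : G) (i : α) :
    SemiconjBy (ι X) (q i) (q (φ X i)) := by
  have hX : X ∈ Subgroup.closure S := hS ▸ Subgroup.mem_top X
  induction hX using Subgroup.closure_induction generalizing i with
  | mem x hx => exact h x hx i
  | one => simp
  | mul x y _ _ hx hy => simpa using (hx (φ y i)).mul_left (hy i)
  | inv x _ hx =>
    have h' := (hx (φ x⁻¹ i)).units_inv_symm_left (a := ι.toHomUnits x)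
    rwa [← map_inv, MonoidHom.coe_toHomUnits, ← Equiv.Perm.mul_apply, ← map_mul, mul_inv_cancel,
      map_one, Equiv.Perm.one_apply] at h'

def Equiv.Perm.permuteCoords (ι N : Type*) [AddMonoid N] :
    Equiv.Perm ι →* AddMonoid.End (ι → N) where
  toFun σ := { toFun := fun b => b ∘ ⇑σ⁻¹, map_zero' := rfl, map_add' := fun _ _ => rfl }
  map_one' := rfl
  map_mul' _ _ := rfl

@[simp]
lemma Equiv.Perm.permuteCoords_apply {ι N : Type*} [AddMonoid N] (σ : Equiv.Perm ι) (b : ι → N) :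
    Equiv.Perm.permuteCoords ι N σ b = b ∘ ⇑σ⁻¹ := rfl

@[ext]
structure SemidirectMonoid (N G : Type*) [AddMonoid N] [Monoid G] (ψ : G →* AddMonoid.End N) where
  left : N
  right : G

namespace SemidirectMonoid

variable {N G : Type*} [AddMonoid N] [Monoid G] {ψ : G →* AddMonoid.End N}

instance : Mul (SemidirectMonoid N G ψ) :=
  ⟨fun z w => ⟨z.left + ψ z.right w.left, z.right * w.right⟩⟩

instance : One (SemidirectMonoid N G ψ) := ⟨⟨0, 1⟩⟩

@[simp] lemma mul_left (z w : SemidirectMonoid N G ψ) :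
    (z * w).left = z.left + ψ z.right w.left := rfl
@[simp] lemma mul_right (z w : SemidirectMonoid N G ψ) : (z * w).right = z.right * w.right := rfl
@[simp] lemma one_left : (1 : SemidirectMonoid N G ψ).left = 0 := rfl
@[simp] lemma one_right : (1 : SemidirectMonoid N G ψ).right = 1 := rfl

instance : Monoid (SemidirectMonoid N G ψ) where
  mul_assoc x y z := by ext <;> simp [add_assoc, mul_assoc]
  one_mul x := by ext <;> simp
  mul_one x := by ext <;> simp

def equivProd : SemidirectMonoid N G ψ ≃ N × G where
  toFun z := (z.left, z.right)
  invFun p := ⟨p.1, p.2⟩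

def inl : Multiplicative N →* SemidirectMonoid N G ψ where
  toFun b := ⟨b.toAdd, 1⟩
  map_one' := rfl
  map_mul' _ _ := by ext <;> simp

def inr : G →* SemidirectMonoid N G ψ where
  toFun x := ⟨0, x⟩
  map_one' := rfl
  map_mul' _ _ := by ext <;> simp

lemma inl_mul_inr (b : N) (x : G) :
    inl (Multiplicative.ofAdd b) * (inr x : SemidirectMonoid N G ψ) = ⟨b, x⟩ := by
  ext <;> simp [inl, inr]

end SemidirectMonoid

namespace MarkedBraid

variable {n : ℕ}

def q (i : Fin n) : MarkedBraid n := (markedBraidCon n).mk' (FreeMonoid.of (.q i))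

def s (j : Fin (n - 1)) : MarkedBraid n := (markedBraidCon n).mk' (FreeMonoid.of (.s j))

def sInv (j : Fin (n - 1)) : MarkedBraid n := (markedBraidCon n).mk' (FreeMonoid.of (.sInv j))

lemma mk'_eq_of_rel {x y : FreeMonoid (MarkedBraidGen n)} (h : MarkedBraidRel n x y) :
    (markedBraidCon n).mk' x = (markedBraidCon n).mk' y :=
  (Con.eq _).2 (ConGen.Rel.of _ _ h)

lemma sInv_mul_s (j : Fin (n - 1)) : sInv j * s j = (1 : MarkedBraid n) :=
  mk'_eq_of_rel (.inv_mul j)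

lemma commute_q (i k : Fin n) : Commute (q i) (q k) :=
  mk'_eq_of_rel (.qq i k)

lemma semiconjBy_s_q (j : Fin (n - 1)) (i : Fin n) : SemiconjBy (s j) (q i) (q (braidT j i)) := by
  have h : q (braidT j i) * s j = s j * q (braidT j (braidT j i)) := mk'_eq_of_rel (.qs _ j)
  rw [braidT, Equiv.swap_apply_self] at h
  exact h.symm

abbrev IsCanonicalMap (ι : BraidGroup n →* MarkedBraid n) : Prop :=
  ∀ j : Fin (n - 1), ι (PresentedGroup.of j) = s j

lemma qPow_eq (a : Fin n → ℕ) : qPow n a = (List.ofFn fun i => q i ^ a i).prod := rfl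

lemma qPow_zero : qPow n 0 = 1 :=
  List.prod_eq_one (by simp)

lemma qPow_add (a b : Fin n → ℕ) : qPow n (a + b) = qPow n a * qPow n b := by
  simp only [qPow_eq, Pi.add_apply, pow_add]
  exact List.prod_ofFn_mul_of_commute fun i j => (commute_q i j).pow_pow _ _

lemma qPow_single (i : Fin n) : qPow n (Pi.single i 1) = q i := by
  rw [qPow_eq, List.ofFn_eq_map, List.prod_map_eq_pow_single i _ fun j hj _ => by simp [hj],
    List.count_finRange]
  simp

lemma semiconjBy_qPow {u : MarkedBraid n} {σ : Equiv.Perm (Fin n)}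
    (h : ∀ i, SemiconjBy u (q i) (q (σ i))) (a : Fin n → ℕ) :
    SemiconjBy u (qPow n a) (qPow n (a ∘ ⇑σ⁻¹)) := by
  have hpow : SemiconjBy u (qPow n a) (List.ofFn fun i => q (σ i) ^ a i).prod :=
    SemiconjBy.list_prod_ofFn fun i => (h i).pow_right (a i)
  convert hpow using 1
  rw [qPow_eq, ← List.prod_ofFn_comp_perm (fun i j => (commute_q i j).pow_pow _ _) σ]
  simp [Function.comp_def]

end MarkedBraid

namespace BraidGroup

variable {n : ℕ}

lemma of_mul_of_mul_of {i j : Fin (n - 1)} (h : (i : ℕ) + 1 = j) :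
    (PresentedGroup.of i : BraidGroup n) * .of j * .of i = .of j * .of i * .of j :=
  PresentedGroup.mk_eq_mk_of_mul_inv_mem (Or.inl ⟨i, j, h, rfl⟩)

lemma of_mul_of {i j : Fin (n - 1)} (h : (i : ℕ) + 2 ≤ j) :
    (PresentedGroup.of i : BraidGroup n) * .of j = .of j * .of i :=
  PresentedGroup.mk_eq_mk_of_mul_inv_mem (Or.inr ⟨i, j, h, rfl⟩)

abbrev IsCanonicalProjection (φ : BraidGroup n →* Equiv.Perm (Fin n)) : Prop :=
  ∀ j : Fin (n - 1), φ (PresentedGroup.of j) = braidT j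

end BraidGroup

namespace MarkedBraid

variable {n : ℕ} (φ : BraidGroup n →* Equiv.Perm (Fin n))

abbrev Semidirect : Type :=
  SemidirectMonoid (Fin n → ℕ) (BraidGroup n) ((Equiv.Perm.permuteCoords (Fin n) ℕ).comp φ)

def semidirectGen : MarkedBraidGen n → Semidirect φ
  | .q i => ⟨Pi.single i 1, 1⟩
  | .s j => ⟨0, .of j⟩
  | .sInv j => ⟨0, (.of j)⁻¹⟩

lemma lift_semidirectGen_eq_of_rel (hφ : BraidGroup.IsCanonicalProjection φ)
    {x y : FreeMonoid (MarkedBraidGen n)} (h : MarkedBraidRel n x y) :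
    FreeMonoid.lift (semidirectGen φ) x = FreeMonoid.lift (semidirectGen φ) y := by
  cases h with
  | braid i j h => ext <;> simp [semidirectGen, BraidGroup.of_mul_of_mul_of h]
  | comm i j h => ext <;> simp [semidirectGen, BraidGroup.of_mul_of h]
  | qq i j => ext <;> simp [semidirectGen, add_comm]
  | qs i j => ext <;> simp [semidirectGen, hφ, braidT, Pi.single_apply]
  | _ => ext <;> simp [semidirectGen]

def toSemidirect (hφ : BraidGroup.IsCanonicalProjection φ) : MarkedBraid n →* Semidirect φ :=
  Con.lift _ (FreeMonoid.lift (semidirectGen φ))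
    (show markedBraidCon n ≤ _ from
      Con.conGen_le.2 fun _ _ h => lift_semidirectGen_eq_of_rel φ hφ h)

variable {φ}

lemma toSemidirect_mk'_of (hφ : BraidGroup.IsCanonicalProjection φ) (g : MarkedBraidGen n) :
    toSemidirect φ hφ ((markedBraidCon n).mk' (FreeMonoid.of g)) = semidirectGen φ g := by
  rw [toSemidirect, Con.lift_mk', FreeMonoid.lift_eval_of]

lemma toSemidirect_qPow (hφ : BraidGroup.IsCanonicalProjection φ) (a : Fin n → ℕ) :
    toSemidirect φ hφ (qPow n a) = SemidirectMonoid.inl (.ofAdd a) := by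
  have hq (i : Fin n) : toSemidirect φ hφ (q i) = SemidirectMonoid.inl (.ofAdd (Pi.single i 1)) :=
    toSemidirect_mk'_of hφ (.q i)
  have hpow : (toSemidirect φ hφ ∘ fun i => q i ^ a i)
      = SemidirectMonoid.inl ∘ fun i => .ofAdd (Pi.single i (a i)) := by
    funext i
    rw [Function.comp_apply, map_pow, hq, ← map_pow, ← ofAdd_nsmul, ← Pi.single_smul', smul_eq_mul,
      mul_one]
    rfl
  rw [qPow_eq, map_list_prod, List.map_ofFn, hpow, ← List.map_ofFn, ← map_list_prod,
    List.prod_ofFn, ← ofAdd_sum, Finset.univ_sum_single]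

lemma toSemidirect_comp_eq_inr (hφ : BraidGroup.IsCanonicalProjection φ)
    {ι : BraidGroup n →* MarkedBraid n} (hι : IsCanonicalMap ι) :
    (toSemidirect φ hφ).comp ι = SemidirectMonoid.inr :=
  MonoidHom.eq_of_eqOn_dense (PresentedGroup.closure_range_of _) <| by
    rintro _ ⟨j, rfl⟩
    rw [MonoidHom.comp_apply, hι]
    exact toSemidirect_mk'_of hφ (.s j)

variable {ι : BraidGroup n →* MarkedBraid n}

lemma map_of_inv_eq_sInv (hι : IsCanonicalMap ι) (j : Fin (n - 1)) :
    ι (PresentedGroup.of j)⁻¹ = sInv j := by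
  refine (left_inv_eq_right_inv (sInv_mul_s j) ?_).symm
  rw [← hι, ← map_mul, mul_inv_cancel, map_one]

lemma semiconjBy_apply_q (hφ : BraidGroup.IsCanonicalProjection φ) (hι : IsCanonicalMap ι)
    (X : BraidGroup n) (i : Fin n) : SemiconjBy (ι X) (q i) (q (φ X i)) :=
  MonoidHom.semiconjBy_of_closure_eq_top ι φ q (PresentedGroup.closure_range_of _)
    (by rintro _ ⟨j, rfl⟩ i; rw [hι, hφ]; exact semiconjBy_s_q j i) X i

def ofSemidirect (hφ : BraidGroup.IsCanonicalProjection φ) (hι : IsCanonicalMap ι) :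
    Semidirect φ →* MarkedBraid n where
  toFun z := qPow n z.left * ι z.right
  map_one' := by simp [qPow_zero]
  map_mul' z w := by
    have hX : ι z.right * qPow n w.left = qPow n (w.left ∘ ⇑(φ z.right)⁻¹) * ι z.right :=
      semiconjBy_qPow (semiconjBy_apply_q hφ hι z.right) w.left
    simp only [SemidirectMonoid.mul_left, SemidirectMonoid.mul_right, MonoidHom.coe_comp,
      Function.comp_apply, Equiv.Perm.permuteCoords_apply, qPow_add, map_mul]
    calc qPow n z.left * qPow n (w.left ∘ ⇑(φ z.right)⁻¹) * (ι z.right * ι w.right)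
        = qPow n z.left * (qPow n (w.left ∘ ⇑(φ z.right)⁻¹) * ι z.right) * ι w.right := by
          simp only [mul_assoc]
      _ = qPow n z.left * ι z.right * (qPow n w.left * ι w.right) := by
          rw [← hX]; simp only [mul_assoc]

variable (hφ : BraidGroup.IsCanonicalProjection φ) (hι : IsCanonicalMap ι)

lemma ofSemidirect_apply (z : Semidirect φ) : ofSemidirect hφ hι z = qPow n z.left * ι z.right :=
  rfl

lemma ofSemidirect_semidirectGen (g : MarkedBraidGen n) :
    ofSemidirect hφ hι (semidirectGen φ g) = (markedBraidCon n).mk' (FreeMonoid.of g) := by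
  cases g with
  | q i => exact (congrArg₂ _ (qPow_single i) (map_one ι)).trans (mul_one _)
  | s j => exact (congrArg₂ _ qPow_zero (hι j)).trans (one_mul _)
  | sInv j => exact (congrArg₂ _ qPow_zero (map_of_inv_eq_sInv hι j)).trans (one_mul _)

lemma toSemidirect_ofSemidirect (z : Semidirect φ) :
    toSemidirect φ hφ (ofSemidirect hφ hι z) = z := by
  rw [ofSemidirect_apply, map_mul, toSemidirect_qPow, ← MonoidHom.comp_apply,
    toSemidirect_comp_eq_inr hφ hι, SemidirectMonoid.inl_mul_inr]

def mulEquivSemidirect : MarkedBraid n ≃* Semidirect φ :=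
  (toSemidirect φ hφ).toMulEquiv (ofSemidirect hφ hι)
    (Con.hom_ext <| FreeMonoid.hom_eq fun g =>
      (congrArg _ (toSemidirect_mk'_of hφ g)).trans (ofSemidirect_semidirectGen hφ hι g))
    (MonoidHom.ext (toSemidirect_ofSemidirect hφ hι))

end MarkedBraid

/-- `B̂_n ≅ Q_n ⋊ B_n`. Here `Q_n` is the free commutative monoid on
`q_1,…,q_n` (identified with exponent vectors `Fin n → ℕ`), `φ : B_n → S_n` is the canonical
projection (`σ_j ↦ (j, j+1)`), and `ι : B_n → B̂_n` is the canonical map (`σ_j ↦ σ_j`).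
There is a bijection `e` from `B̂_n` to the underlying set `Q_n × B_n` of the semidirect
product which is multiplicative for the semidirect multiplication
`(a, X)(b, Y) = (a · X(b), XY)` (where `X` acts on exponent vectors via `φ`), and under
which every element of `B̂_n` is written — uniquely, since `e` is a bijection — in the form
`q_1^{a_1} ⋯ q_n^{a_n} X` with `a_i ≥ 0` and `X ∈ B_n`. -/
theorem markedBraid_semidirect (n : ℕ)
    (φ : BraidGroup n →* Equiv.Perm (Fin n))
    (hφ : ∀ j : Fin (n - 1), φ (PresentedGroup.of j) = braidT j)
    (ι : BraidGroup n →* MarkedBraid n)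
    (hι : ∀ j : Fin (n - 1),
      ι (PresentedGroup.of j) = (markedBraidCon n).mk' (FreeMonoid.of (MarkedBraidGen.s j))) :
    ∃ e : MarkedBraid n ≃ (Fin n → ℕ) × BraidGroup n,
      (∀ z : MarkedBraid n, z = qPow n (e z).1 * ι (e z).2)
      ∧ ∀ z w : MarkedBraid n,
          e (z * w) = ((e z).1 + fun i => (e w).1 ((φ (e z).2)⁻¹ i), (e z).2 * (e w).2) := by
  let E := MarkedBraid.mulEquivSemidirect hφ hι
  exact ⟨E.toEquiv.trans SemidirectMonoid.equivProd, fun z => (E.symm_apply_apply z).symm,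
    fun z w => congrArg SemidirectMonoid.equivProd (map_mul E z w)⟩
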